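/- arXiv:2211.04749 — 2 statements merged into one kernel-verified Lean document; each statement's English description precedes it below -/
import Mathlib

section
/- For integers d ≥ 1, k ≥ 1, 0 ≤ a ≤ k, 1 ≤ e ≤ d, and any 1 ≤ f ≤ d, the two-variable generating function \overline{U}_{dk+e, da+f}(x) equals \overline{U}_{dk+e, da+d}(x); equivalently, \overline{u}_{dk+e,da+f}(m,n) = \overline{u}_{dk+e,da+d}(m,n) for all m,n. -/
/-- An overpartition recorded by a pair of multiplicity functions:
`p.1 i` is the number of non-overlined occurrences of the part `i` and
`p.2 i ∈ {0, 1}` is the number of overlined occurrences of `i`.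
There are no parts equal to `0`. -/
def IsOverPtn (p : (ℕ →₀ ℕ) × (ℕ →₀ ℕ)) : Prop :=
  p.1 0 = 0 ∧ p.2 0 = 0 ∧ ∀ i, p.2 i ≤ 1

/-- The number of parts of an overpartition. -/
def opParts (p : (ℕ →₀ ℕ) × (ℕ →₀ ℕ)) : ℕ :=
  (p.1.sum fun _ v => v) + (p.2.sum fun _ v => v)

/-- The weight (number partitioned) of an overpartition. -/
def opWt (p : (ℕ →₀ ℕ) × (ℕ →₀ ℕ)) : ℕ :=
  (p.1.sum fun i v => i * v) + (p.2.sum fun i v => i * v)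

/-- Conditions (i)-(iv) of Definition 1.6 (Kursungoz–Zadehdabbagh), with modulus `d`,
first index `N = dk + e` and second index `M = da + f`: writing `f_i = p.1 i`,
`f_{ī} = p.2 i`,
(i) `f_1 ≤ M - 1 + (d-1) f_{1̄}`;
(ii) `f_{2l-1} ≥ (d-1) f_{\overline{2l-1}}`;
(iii) `f_{2l} + f_{\overline{2l}} ≡ 0 (mod d)`;
(iv) `f_l + f_{l̄} + f_{l+1} ≤ N - 1 + (d-1) f_{\overline{l+1}}` for all `l ≥ 1`. -/
def uCond (d N M : ℕ) (p : (ℕ →₀ ℕ) × (ℕ →₀ ℕ)) : Prop :=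
  p.1 1 + 1 ≤ M + (d - 1) * p.2 1 ∧
  (∀ l : ℕ, (d - 1) * p.2 (2 * l + 1) ≤ p.1 (2 * l + 1)) ∧
  (∀ l : ℕ, d ∣ p.1 (2 * l + 2) + p.2 (2 * l + 2)) ∧
  (∀ l : ℕ, 1 ≤ l → p.1 l + p.2 l + p.1 (l + 1) + 1 ≤ N + (d - 1) * p.2 (l + 1))

/-- Conditions (ī)-(iv̄): as `uCond` with the parity roles of odd and even parts
swapped in the second and third conditions. -/
def ubarCond (d N M : ℕ) (p : (ℕ →₀ ℕ) × (ℕ →₀ ℕ)) : Prop :=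
  p.1 1 + 1 ≤ M + (d - 1) * p.2 1 ∧
  (∀ l : ℕ, (d - 1) * p.2 (2 * l + 2) ≤ p.1 (2 * l + 2)) ∧
  (∀ l : ℕ, d ∣ p.1 (2 * l + 1) + p.2 (2 * l + 1)) ∧
  (∀ l : ℕ, 1 ≤ l → p.1 l + p.2 l + p.1 (l + 1) + 1 ≤ N + (d - 1) * p.2 (l + 1))

/-- `u_{N, M}(m, n)`: the number of overpartitions of `n` into `m` parts
satisfying conditions (i)-(iv). -/
noncomputable def uCount (d N M m n : ℕ) : ℕ :=
  Set.ncard {p : (ℕ →₀ ℕ) × (ℕ →₀ ℕ) |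
    IsOverPtn p ∧ opParts p = m ∧ opWt p = n ∧ uCond d N M p}

/-- `ū_{N, M}(m, n)`: the number of overpartitions of `n` into `m` parts
satisfying conditions (ī)-(iv̄). -/
noncomputable def ubarCount (d N M m n : ℕ) : ℕ :=
  Set.ncard {p : (ℕ →₀ ℕ) × (ℕ →₀ ℕ) |
    IsOverPtn p ∧ opParts p = m ∧ opWt p = n ∧ ubarCond d N M p}

/-- The two-variable generating function `U_{N,M}(x) = Σ u_{N,M}(m,n) x^m q^n`. -/
noncomputable def Ugf (d N M : ℕ) (x q : ℂ) : ℂ :=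
  ∑' mn : ℕ × ℕ, (uCount d N M mn.1 mn.2 : ℂ) * x ^ mn.1 * q ^ mn.2

/-- The two-variable generating function `Ū_{N,M}(x) = Σ ū_{N,M}(m,n) x^m q^n`. -/
noncomputable def UbarGf (d N M : ℕ) (x q : ℂ) : ℂ :=
  ∑' mn : ℕ × ℕ, (ubarCount d N M mn.1 mn.2 : ℂ) * x ^ mn.1 * q ^ mn.2

/-- The infinite q-Pochhammer symbol `(a; q)_∞ = ∏_{j ≥ 0} (1 - a q^j)`. -/
noncomputable def qPochInf (a q : ℂ) : ℂ := ∏' j : ℕ, (1 - a * q ^ j)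

/-- The finite q-Pochhammer symbol `(a; q)_n = ∏_{j=0}^{n-1} (1 - a q^j)`. -/
noncomputable def qPochFin (a q : ℂ) (n : ℕ) : ℂ := ∏ j ∈ Finset.range n, (1 - a * q ^ j)

/-- Lemma 2.1: `Ū_{dk+e, da+f}(x) = Ū_{dk+e, da+d}(x)`, i.e.
`ū_{dk+e, da+f}(m, n) = ū_{dk+e, da+d}(m, n)` for all `m, n`. -/
theorem ubar_adjustment (d k e a f : ℕ) (hd : 1 ≤ d) (hk : 1 ≤ k) (hak : a ≤ k)
    (he1 : 1 ≤ e) (hed : e ≤ d) (hf1 : 1 ≤ f) (hfd : f ≤ d) (m n : ℕ) :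
    ubarCount d (d * k + e) (d * a + f) m n = ubarCount d (d * k + e) (d * a + d) m n := by
  unfold ubarCount
  congr 1
  ext p
  simp only [Set.mem_setOf_eq]
  have key : ∀ M₂ : ℕ, p.2 1 ≤ 1 → d ∣ p.1 1 + p.2 1 →
      (p.1 1 + 1 ≤ d * a + d + (d - 1) * p.2 1) →
      (1 ≤ M₂) → (M₂ ≤ d) →
      p.1 1 + 1 ≤ d * a + M₂ + (d - 1) * p.2 1 := by
    intro M₂ hs hdvd hc1 hM1 hM2
    obtain ⟨d', rfl⟩ : ∃ d', d = d' + 1 := ⟨d - 1, by omega⟩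
    obtain ⟨t, ht⟩ := hdvd
    simp only [Nat.add_sub_cancel] at hc1 ⊢
    rcases Nat.le_one_iff_eq_zero_or_eq_one.mp hs with h | h <;> rw [h] at ht hc1 ⊢
    · simp only [Nat.mul_zero, Nat.add_zero] at ht hc1 ⊢
      have h1 : (d' + 1) * t < (d' + 1) * (a + 1) := by
        have : (d' + 1) * (a + 1) = (d' + 1) * a + (d' + 1) := by ring
        rw [this]; omega
      have h2 : t ≤ a := by
        have := Nat.lt_of_mul_lt_mul_left h1; omega
      have h3 : (d' + 1) * t ≤ (d' + 1) * a := Nat.mul_le_mul_left _ h2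
      omega
    · simp only [Nat.mul_one] at ht hc1 ⊢
      have h1 : (d' + 1) * t < (d' + 1) * (a + 2) := by
        have : (d' + 1) * (a + 2) = (d' + 1) * a + 2 * (d' + 1) := by ring
        rw [this]; omega
      have h2 : t ≤ a + 1 := by
        have := Nat.lt_of_mul_lt_mul_left h1; omega
      have h3 : (d' + 1) * t ≤ (d' + 1) * (a + 1) := Nat.mul_le_mul_left _ h2
      have h4 : (d' + 1) * (a + 1) = (d' + 1) * a + (d' + 1) := by ring
      omega
  constructor <;> rintro ⟨h0, h1, h2, hc1, hc2, hc3, hc4⟩ <;>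
    refine ⟨h0, h1, h2, ?_, hc2, hc3, hc4⟩
  · have hdvd : d ∣ p.1 1 + p.2 1 := by have := hc3 0; norm_num at this; exact this
    exact key d (h0.2.2 1) hdvd (by omega) hd le_rfl
  · have hdvd : d ∣ p.1 1 + p.2 1 := by have := hc3 0; norm_num at this; exact this
    exact key f (h0.2.2 1) hdvd hc1 hf1 hfd
end

section
/- With parameters d ≥ 1, k ≥ 1, 0 ≤ a ≤ k, 1 ≤ e,f ≤ d: if f ≤ e then U_{dk+e,da+f}(x) − U_{dk+e,da+f−1}(x) = (xq)^{da+f−1} \overline{U}_{dk+e,d(k−a)+d}(xq) + (xq)^{da+d+f−1} \overline{U}_{dk+e,d(k−a−1)+d}(xq). -/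
lemma Int.mul_le_mul_add_iff_of_lt {d c x y : ℤ} (hc₀ : 0 ≤ c) (hcd : c < d) :
    d * x ≤ d * y + c ↔ x ≤ y :=
  ⟨fun h => by by_contra! hxy; nlinarith, fun h => by nlinarith⟩

namespace Overpartition

open Finsupp

noncomputable def raise₀ (c : ℕ) (g : ℕ →₀ ℕ) : ℕ →₀ ℕ :=
  embDomain (addRightEmbedding 1) g + single 1 c

noncomputable def lower₀ (g : ℕ →₀ ℕ) : ℕ →₀ ℕ :=
  (comapDomain (· + 1) g (add_left_injective 1).injOn).erase 0

section Shift

variable (c : ℕ) (g : ℕ →₀ ℕ)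

lemma raise₀_apply_zero : raise₀ c g 0 = 0 := by
  simp [raise₀, embDomain_of_notMem_range]

lemma raise₀_apply_one : raise₀ c g 1 = g 0 + c := by
  simpa [raise₀] using embDomain_apply_self (addRightEmbedding 1) g 0

lemma raise₀_apply_add_two (i : ℕ) : raise₀ c g (i + 2) = g (i + 1) := by
  simpa [raise₀] using embDomain_apply_self (addRightEmbedding 1) g (i + 1)

lemma lower₀_apply_zero : lower₀ g 0 = 0 := erase_same

lemma lower₀_apply_add_one (i : ℕ) : lower₀ g (i + 1) = g (i + 2) := by
  rw [lower₀, erase_ne i.succ_ne_zero, comapDomain_apply]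

lemma lower₀_raise₀ (hg : g 0 = 0) : lower₀ (raise₀ c g) = g := by
  ext (_ | i)
  · rw [lower₀_apply_zero, hg]
  · rw [lower₀_apply_add_one, raise₀_apply_add_two]

lemma raise₀_lower₀ (hg : g 0 = 0) : raise₀ (g 1) (lower₀ g) = g := by
  ext (_ | _ | i)
  · rw [raise₀_apply_zero, hg]
  · rw [raise₀_apply_one, lower₀_apply_zero, zero_add]
  · rw [raise₀_apply_add_two, lower₀_apply_add_one]

lemma degree_raise₀ : degree (raise₀ c g) = degree g + c := by
  rw [raise₀, map_add, degree_single]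
  exact congrArg (· + c) (sum_embDomain (g := fun _ v => v))

lemma weight_raise₀ : weight id (raise₀ c g) = weight id g + degree g + c := by
  rw [raise₀, map_add, weight_single, weight_apply, weight_apply, sum_embDomain, degree_apply]
  simp only [addRightEmbedding_apply, id_eq, smul_eq_mul, mul_add, mul_one, sum_add]
  rfl

end Shift

noncomputable def raise (c r : ℕ) (p : (ℕ →₀ ℕ) × (ℕ →₀ ℕ)) : (ℕ →₀ ℕ) × (ℕ →₀ ℕ) :=
  (raise₀ c p.1, raise₀ r p.2)

noncomputable def lower (p : (ℕ →₀ ℕ) × (ℕ →₀ ℕ)) : (ℕ →₀ ℕ) × (ℕ →₀ ℕ) :=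
  (lower₀ p.1, lower₀ p.2)

section Raise

variable (c r : ℕ) (p : (ℕ →₀ ℕ) × (ℕ →₀ ℕ))

lemma opParts_eq_degree : opParts p = degree p.1 + degree p.2 := rfl

lemma opWt_eq_weight : opWt p = weight id p.1 + weight id p.2 := by
  simp only [opWt, weight_apply, smul_eq_mul, id, mul_comm]

lemma opParts_raise : opParts (raise c r p) = opParts p + (c + r) := by
  simp only [opParts_eq_degree, raise, degree_raise₀]; ring

lemma opWt_raise : opWt (raise c r p) = opWt p + opParts p + (c + r) := by
  simp only [opWt_eq_weight, opParts_eq_degree, raise, weight_raise₀]; ring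

variable {c r p}

lemma isOverPtn_raise (hr : r ≤ 1) (hp : IsOverPtn p) : IsOverPtn (raise c r p) := by
  refine ⟨raise₀_apply_zero _ _, raise₀_apply_zero _ _, fun i => ?_⟩
  match i with
  | 0 => exact (raise₀_apply_zero _ _).trans_le (Nat.zero_le 1)
  | 1 => simpa [raise, raise₀_apply_one, hp.2.1] using hr
  | i + 2 => simpa [raise, raise₀_apply_add_two] using hp.2.2 (i + 1)

lemma isOverPtn_lower (hp : IsOverPtn p) : IsOverPtn (lower p) := by
  refine ⟨lower₀_apply_zero _, lower₀_apply_zero _, fun i => ?_⟩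
  match i with
  | 0 => exact (lower₀_apply_zero _).trans_le (Nat.zero_le 1)
  | i + 1 => simpa [lower, lower₀_apply_add_one] using hp.2.2 (i + 2)

lemma lower_raise (hp : IsOverPtn p) : lower (raise c r p) = p :=
  Prod.ext (lower₀_raise₀ _ _ hp.1) (lower₀_raise₀ _ _ hp.2.1)

lemma raise_lower (hp : IsOverPtn p) : raise (p.1 1) (p.2 1) (lower p) = p :=
  Prod.ext (raise₀_lower₀ _ hp.1) (raise₀_lower₀ _ hp.2.1)

end Raise

def uSet (d N M : ℕ) : Set ((ℕ →₀ ℕ) × (ℕ →₀ ℕ)) := {p | IsOverPtn p ∧ uCond d N M p}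

def ubarSet (d N M : ℕ) : Set ((ℕ →₀ ℕ) × (ℕ →₀ ℕ)) := {p | IsOverPtn p ∧ ubarCond d N M p}

/-- The overpartitions counted by `u_{N, M+1}` but not by `u_{N, M}` that have `r` overlined
ones: condition (i) holds with equality. -/
def uTightSet (d N M r : ℕ) : Set ((ℕ →₀ ℕ) × (ℕ →₀ ℕ)) :=
  {p | IsOverPtn p ∧ uCond d N (M + 1) p ∧ p.2 1 = r ∧ p.1 1 = M + (d - 1) * r}

section Split

variable (d N M : ℕ)

lemma uSet_succ :
    uSet d N (M + 1) = uSet d N M ∪ (uTightSet d N M 0 ∪ uTightSet d N M 1) := by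
  ext p
  simp only [uSet, uTightSet, Set.mem_union, Set.mem_ofPred_eq]
  constructor
  · rintro ⟨hp, h1, hcond⟩
    by_cases htight : p.1 1 + 1 ≤ M + (d - 1) * p.2 1
    · exact Or.inl ⟨hp, htight, hcond⟩
    · have hr := hp.2.2 1
      refine Or.inr ?_
      rcases (by omega : p.2 1 = 0 ∨ p.2 1 = 1) with h | h
      · exact Or.inl ⟨hp, ⟨h1, hcond⟩, h, by rw [h] at h1 htight; omega⟩
      · exact Or.inr ⟨hp, ⟨h1, hcond⟩, h, by rw [h] at h1 htight; omega⟩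
  · rintro (⟨hp, h1, hcond⟩ | ⟨hp, hcond, -⟩ | ⟨hp, hcond, -⟩)
    · exact ⟨hp, by omega, hcond⟩
    all_goals exact ⟨hp, hcond⟩

lemma disjoint_uSet_uTightSet (r : ℕ) : Disjoint (uSet d N M) (uTightSet d N M r) := by
  rw [Set.disjoint_left]
  rintro p ⟨-, h1, -⟩ ⟨-, -, h2, h1'⟩
  rw [h2, h1'] at h1
  omega

lemma disjoint_uTightSet_zero_one : Disjoint (uTightSet d N M 0) (uTightSet d N M 1) := by
  rw [Set.disjoint_left]
  rintro p ⟨-, -, h, -⟩ ⟨-, -, h', -⟩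
  omega

end Split

/-- Condition (iv) at `l = 1` of `raise (M + (d - 1) * r) r p` says the same as condition (ī)
of `p`, for all `v₁ = p.1 1`, `v₂ = p.2 1` allowed by (iiī). -/
def RaiseCompatible (d N M M' r : ℕ) : Prop :=
  ∀ v₁ v₂, d ∣ v₁ + v₂ →
    (M + (d - 1) * r + r + v₁ + 1 ≤ N + (d - 1) * v₂ ↔ v₁ + 1 ≤ M' + (d - 1) * v₂)

section Bijection

variable {d N M M' r : ℕ} {p : (ℕ →₀ ℕ) × (ℕ →₀ ℕ)}

lemma uCond_raise_iff
    (hcompat : RaiseCompatible d N M M' r) (hp : IsOverPtn p) :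
    uCond d N (M + 1) (raise (M + (d - 1) * r) r p) ↔ ubarCond d N M' p := by
  set P := raise (M + (d - 1) * r) r p
  have h11 : P.1 1 = M + (d - 1) * r := by simp [P, raise, raise₀_apply_one, hp.1]
  have h21 : P.2 1 = r := by simp [P, raise, raise₀_apply_one, hp.2.1]
  have h1s (i : ℕ) : P.1 (i + 2) = p.1 (i + 1) := raise₀_apply_add_two _ _ i
  have h2s (i : ℕ) : P.2 (i + 2) = p.2 (i + 1) := raise₀_apply_add_two _ _ i
  have hodd : (∀ l, (d - 1) * P.2 (2 * l + 1) ≤ P.1 (2 * l + 1)) ↔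
      ∀ l, (d - 1) * p.2 (2 * l + 2) ≤ p.1 (2 * l + 2) := by
    refine ⟨fun h l => by simpa [h1s, h2s, mul_add, add_assoc] using h (l + 1), fun h l => ?_⟩
    rcases l with _ | l
    · simp [h11, h21]
    · simpa [h1s, h2s, mul_add, add_assoc] using h l
  have heven : (∀ l, d ∣ P.1 (2 * l + 2) + P.2 (2 * l + 2)) ↔
      ∀ l, d ∣ p.1 (2 * l + 1) + p.2 (2 * l + 1) := by
    simp only [h1s, h2s]
  have hadj : (∀ l, 1 ≤ l → P.1 l + P.2 l + P.1 (l + 1) + 1 ≤ N + (d - 1) * P.2 (l + 1)) ↔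
      (M + (d - 1) * r + r + p.1 1 + 1 ≤ N + (d - 1) * p.2 1) ∧
      ∀ l, 1 ≤ l → p.1 l + p.2 l + p.1 (l + 1) + 1 ≤ N + (d - 1) * p.2 (l + 1) := by
    refine ⟨fun h => ⟨by simpa [h11, h21, h1s, h2s] using h 1 le_rfl, fun l hl => ?_⟩,
      fun ⟨h1, h⟩ l hl => ?_⟩
    · obtain ⟨l, rfl⟩ := Nat.exists_eq_add_of_le' hl
      simpa [h1s, h2s] using h (l + 2) (by omega)
    · obtain ⟨l, rfl⟩ := Nat.exists_eq_add_of_le' hl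
      rcases l with _ | l
      · simpa [h11, h21, h1s, h2s] using h1
      · simpa [h1s, h2s] using h (l + 1) (by omega)
  rw [uCond, ubarCond, hodd, heven, hadj, h11, h21]
  constructor
  · rintro ⟨-, hodd, heven, h1, hadj⟩
    exact ⟨(hcompat _ _ (heven 0)).1 h1, hodd, heven, hadj⟩
  · rintro ⟨h1, hodd, heven, hadj⟩
    exact ⟨by omega, hodd, heven, (hcompat _ _ (heven 0)).2 h1, hadj⟩

noncomputable def raiseEquiv (hr : r ≤ 1) (hcompat : RaiseCompatible d N M M' r) :
    ubarSet d N M' ≃ uTightSet d N M r where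
  toFun p := ⟨raise (M + (d - 1) * r) r p, isOverPtn_raise hr p.2.1,
    (uCond_raise_iff hcompat p.2.1).2 p.2.2,
    by simp [raise, raise₀_apply_one, p.2.1.2.1],
    by simp [raise, raise₀_apply_one, p.2.1.1]⟩
  invFun p := ⟨lower p, isOverPtn_lower p.2.1, by
    obtain ⟨hp, hcond, h2, h1⟩ := p.2
    have hraise := raise_lower hp
    rw [h1, h2] at hraise
    rw [← hraise] at hcond
    exact (uCond_raise_iff hcompat (isOverPtn_lower hp)).1 hcond⟩
  left_inv p := Subtype.ext (lower_raise p.2.1)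
  right_inv p := Subtype.ext <| by
    obtain ⟨hp, -, h2, h1⟩ := p.2
    simpa [h1, h2] using raise_lower hp

end Bijection

def binaryDigits (g : ℕ →₀ ℕ) : Finset (Σ _ : ℕ, ℕ) :=
  g.support.sigma fun i => (g i).bitIndices.toFinset

lemma mem_binaryDigits {g : ℕ →₀ ℕ} {x : Σ _ : ℕ, ℕ} :
    x ∈ binaryDigits g ↔ x.2 ∈ (g x.1).bitIndices.toFinset := by
  rw [binaryDigits, Finset.mem_sigma, and_iff_right_iff_imp, mem_support_iff]
  rintro hx h
  simp [h] at hx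

lemma binaryDigits_injective : Function.Injective binaryDigits := by
  intro g h hgh
  ext i
  apply Finset.equivBitIndices.injective
  ext j
  simpa only [Finset.equivBitIndices_apply, mem_binaryDigits] using
    Finset.ext_iff.1 hgh ⟨i, j⟩

lemma prod_binaryDigits (r : ℝ) {g : ℕ →₀ ℕ} (hg : g 0 = 0) :
    ∏ x ∈ binaryDigits g, (if x.1 = 0 then 0 else r ^ (x.1 * 2 ^ x.2)) = r ^ weight id g := by
  rw [binaryDigits, Finset.prod_sigma, weight_apply, Finsupp.sum, ← Finset.prod_pow_eq_pow_sum]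
  refine Finset.prod_congr rfl fun i hi => ?_
  have hi0 : i ≠ 0 := by rintro rfl; exact mem_support_iff.1 hi hg
  simp only [hi0, if_false, Finset.prod_pow_eq_pow_sum, ← Finset.mul_sum,
    Finset.sum_toFinset_bitIndices_two_pow, smul_eq_mul, id, mul_comm]

/-- Binary digits of the multiplicities embed `{g | g 0 = 0}` into the finite sets of pairs
`(i, j)`, `i ≠ 0`, and the weights `r ^ (i 2^j)` of the pairs are summable. -/
lemma summable_pow_weight {r : ℝ} (hr₀ : 0 ≤ r) (hr₁ : r < 1) :
    Summable fun g : {g : ℕ →₀ ℕ // g 0 = 0} => r ^ weight id g.1 := by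
  set w : (Σ _ : ℕ, ℕ) → ℝ := fun x => if x.1 = 0 then 0 else r ^ (x.1 * 2 ^ x.2)
  have hw₀ (x) : 0 ≤ w x := by dsimp only [w]; split_ifs <;> positivity
  have hw : Summable w := by
    have hgeom := summable_geometric_of_lt_one hr₀ hr₁
    refine Summable.of_nonneg_of_le hw₀ (fun x => ?_)
      ((Equiv.sigmaEquivProd ℕ ℕ).summable_iff.2 (hgeom.mul_of_nonneg hgeom
        (fun _ => by positivity) (fun _ => by positivity)))
    obtain ⟨i, j⟩ := x
    dsimp only [w, Equiv.sigmaEquivProd_apply, Function.comp]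
    split_ifs with hi
    · positivity
    · rw [← pow_add]
      refine pow_le_pow_of_le_one hr₀ hr₁.le ?_
      calc i + j ≤ i * (j + 1) := by nlinarith [Nat.one_le_iff_ne_zero.2 hi]
        _ ≤ i * 2 ^ j := Nat.mul_le_mul_left _ Nat.lt_two_pow_self
  refine ((summable_finsetProd_of_summable_nonneg hw₀ hw).comp_injective
    (binaryDigits_injective.comp Subtype.val_injective)).congr fun g => ?_
  exact prod_binaryDigits r g.2

noncomputable def opGf (S : Set ((ℕ →₀ ℕ) × (ℕ →₀ ℕ))) (x q : ℂ) : ℂ :=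
  ∑' p : S, x ^ opParts p.1 * q ^ opWt p.1

section Summable

variable {S T : Set ((ℕ →₀ ℕ) × (ℕ →₀ ℕ))} {x q : ℂ}

lemma summable_opGf (hS : ∀ p ∈ S, IsOverPtn p) (hx : ‖x‖ ≤ 1) (hq : ‖q‖ < 1) :
    Summable fun p : S => x ^ opParts p.1 * q ^ opWt p.1 := by
  have hpow := summable_pow_weight (norm_nonneg q) hq
  have hpairs := hpow.mul_of_nonneg hpow (fun _ => by positivity) (fun _ => by positivity)
  have hinj : Function.Injective fun p : S =>
      ((⟨p.1.1, (hS p p.2).1⟩, ⟨p.1.2, (hS p p.2).2.1⟩) :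
        {g : ℕ →₀ ℕ // g 0 = 0} × {g : ℕ →₀ ℕ // g 0 = 0}) := by
    intro p p' h
    simp only [Prod.mk.injEq, Subtype.mk.injEq] at h
    exact Subtype.ext (Prod.ext h.1 h.2)
  refine (hpairs.comp_injective hinj).of_norm_bounded fun p => ?_
  simp only [Function.comp, norm_mul, norm_pow, ← pow_add, ← opWt_eq_weight]
  exact mul_le_of_le_one_left (by positivity) (pow_le_one₀ (norm_nonneg x) hx)

lemma opGf_union (hS : ∀ p ∈ S, IsOverPtn p) (hT : ∀ p ∈ T, IsOverPtn p) (hST : Disjoint S T)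
    (hx : ‖x‖ ≤ 1) (hq : ‖q‖ < 1) : opGf (S ∪ T) x q = opGf S x q + opGf T x q :=
  (summable_opGf hS hx hq).tsum_union_disjoint (f := fun p => x ^ opParts p * q ^ opWt p) hST
    (summable_opGf hT hx hq)

lemma tsum_ncard_eq_opGf (P : (ℕ →₀ ℕ) × (ℕ →₀ ℕ) → Prop) (hx : ‖x‖ ≤ 1) (hq : ‖q‖ < 1) :
    ∑' mn : ℕ × ℕ, (Set.ncard {p | IsOverPtn p ∧ opParts p = mn.1 ∧ opWt p = mn.2 ∧ P p} : ℂ) *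
      x ^ mn.1 * q ^ mn.2 = opGf {p | IsOverPtn p ∧ P p} x q := by
  set S := {p | IsOverPtn p ∧ P p}
  set stats : (ℕ →₀ ℕ) × (ℕ →₀ ℕ) → ℕ × ℕ := fun p => (opParts p, opWt p)
  have hfiber (mn : ℕ × ℕ) : Nat.card ((stats ∘ Subtype.val : S → ℕ × ℕ) ⁻¹' {mn}) =
      Set.ncard {p | IsOverPtn p ∧ opParts p = mn.1 ∧ opWt p = mn.2 ∧ P p} := by
    rw [← Nat.card_coe_set_eq]
    refine Nat.card_congr ((Equiv.subtypeSubtypeEquivSubtypeInter (· ∈ S)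
      (fun p => stats p ∈ ({mn} : Set (ℕ × ℕ)))).trans (Equiv.subtypeEquivRight fun p => ?_))
    simp only [S, stats, Set.mem_singleton_iff, Prod.ext_iff, Set.mem_ofPred_eq]
    tauto
  refine (((summable_opGf (fun p hp => hp.1) hx hq).hasSum.tsum_fiberwise
    (stats ∘ Subtype.val)).tsum_eq.symm.trans (tsum_congr fun mn => ?_)).symm
  rw [← hfiber, ← nsmul_eq_mul, smul_mul_assoc, ← tsum_const]
  refine tsum_congr fun ⟨p, hp⟩ => ?_
  obtain ⟨hm, hn⟩ := Prod.ext_iff.1 (Set.mem_singleton_iff.1 hp)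
  simp only [← hm, ← hn, stats, Function.comp]

end Summable

lemma opGf_uTightSet {d N M M' r : ℕ} (hr : r ≤ 1) (hcompat : RaiseCompatible d N M M' r)
    (x q : ℂ) :
    opGf (uTightSet d N M r) x q =
      (x * q) ^ (M + (d - 1) * r + r) * opGf (ubarSet d N M') (x * q) q := by
  rw [opGf, opGf, ← (raiseEquiv hr hcompat).tsum_eq, ← tsum_mul_left]
  refine tsum_congr fun p => ?_
  simp only [raiseEquiv, Equiv.coe_fn_mk, opParts_raise, opWt_raise]
  ring

lemma opGf_uSet_succ (d N M : ℕ) {x q : ℂ} (hx : ‖x‖ ≤ 1) (hq : ‖q‖ < 1) :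
    opGf (uSet d N (M + 1)) x q =
      opGf (uSet d N M) x q + (opGf (uTightSet d N M 0) x q + opGf (uTightSet d N M 1) x q) := by
  rw [uSet_succ, opGf_union (fun _ hp => hp.1) (fun _ hp => hp.elim (·.1) (·.1))
      ((disjoint_uSet_uTightSet _ _ _ _).union_right (disjoint_uSet_uTightSet _ _ _ _)) hx hq,
    opGf_union (fun _ hp => hp.1) (fun _ hp => hp.1) (disjoint_uTightSet_zero_one _ _ _) hx hq]

lemma Ugf_eq_opGf (d N M : ℕ) {x q : ℂ} (hx : ‖x‖ ≤ 1) (hq : ‖q‖ < 1) :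
    Ugf d N M x q = opGf (uSet d N M) x q :=
  tsum_ncard_eq_opGf _ hx hq

lemma UbarGf_eq_opGf (d N M : ℕ) {x q : ℂ} (hx : ‖x‖ ≤ 1) (hq : ‖q‖ < 1) :
    UbarGf d N M x q = opGf (ubarSet d N M) x q :=
  tsum_ncard_eq_opGf _ hx hq

/-- Writing `v₁ + v₂ = d t`, both sides say `t + r ≤ k - a + v₂`, because `0 ≤ e - f < d`. -/
lemma raiseCompatible {d k e a f M r M' : ℕ} (hf : 1 ≤ f) (hfe : f ≤ e) (hed : e ≤ d)
    (hak : a ≤ k) (hM : d * a + f = M + 1) (hM' : M' + d * r = d * (k - a) + d) :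
    RaiseCompatible d (d * k + e) M M' r := by
  intro v₁ v₂ ⟨t, ht⟩
  have hd : 1 ≤ d := hf.trans (hfe.trans hed)
  obtain ⟨b, rfl⟩ := Nat.exists_eq_add_of_le hak
  rw [Nat.add_sub_cancel_left] at hM'
  zify [hd] at ht hM hM' ⊢
  calc _ ↔ (d : ℤ) * (t + r) ≤ d * (b + v₂) + (e - f) := by constructor <;> intro <;> linarith
    _ ↔ (t + r : ℤ) ≤ b + v₂ := Int.mul_le_mul_add_iff_of_lt (by omega) (by omega)
    _ ↔ (d : ℤ) * (t + r) ≤ d * (b + v₂) + (d - 1) :=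
      (Int.mul_le_mul_add_iff_of_lt (by omega) (by omega)).symm
    _ ↔ _ := by constructor <;> intro <;> linarith

end Overpartition

open Overpartition in
theorem U_functional_equation_general (d k e a f : ℕ) (hak : a ≤ k)
    (hed : e ≤ d) (hf1 : 1 ≤ f) (hfe : f ≤ e)
    (x q : ℂ) (hx : ‖x‖ ≤ 1) (hq : ‖q‖ < 1) :
    Ugf d (d * k + e) (d * a + f) x q - Ugf d (d * k + e) (d * a + f - 1) x q
      = (x * q) ^ (d * a + f - 1) * UbarGf d (d * k + e) (d * (k - a) + d) (x * q) q
        + (x * q) ^ (d * a + d + f - 1) * UbarGf d (d * k + e) (d * (k - a)) (x * q) q := by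
  have hxq : ‖x * q‖ ≤ 1 := (norm_mul_le x q).trans (mul_le_one₀ hx (norm_nonneg q) hq.le)
  obtain ⟨M, hM⟩ : ∃ M, d * a + f = M + 1 := ⟨d * a + f - 1, by omega⟩
  rw [Ugf_eq_opGf _ _ _ hx hq, Ugf_eq_opGf _ _ _ hx hq, UbarGf_eq_opGf _ _ _ hxq hq,
    UbarGf_eq_opGf _ _ _ hxq hq, show d * a + d + f - 1 = M + (d - 1) * 1 + 1 by omega, hM,
    Nat.add_sub_cancel, opGf_uSet_succ _ _ _ hx hq,
    opGf_uTightSet (Nat.zero_le 1) (raiseCompatible hf1 hfe hed hak hM (M' := d * (k - a) + d)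
      (by ring)),
    opGf_uTightSet le_rfl (raiseCompatible hf1 hfe hed hak hM (M' := d * (k - a)) (by ring))]
  ring

/-- Lemma 2.2, first functional equation (case `f ≤ e`):
`U_{dk+e, da+f}(x) − U_{dk+e, da+f-1}(x)
  = (xq)^{da+f-1} Ū_{dk+e, d(k-a)+d}(xq) + (xq)^{da+d+f-1} Ū_{dk+e, d(k-a-1)+d}(xq)`.
(Note `d(k-a-1) + d = d(k-a)`.) -/
theorem U_functional_equation (d k e a f : ℕ) (hd : 1 ≤ d) (hk : 1 ≤ k) (hak : a ≤ k)
    (he1 : 1 ≤ e) (hed : e ≤ d) (hf1 : 1 ≤ f) (hfe : f ≤ e)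
    (x q : ℂ) (hx : ‖x‖ ≤ 1) (hq : ‖q‖ < 1) :
    Ugf d (d * k + e) (d * a + f) x q - Ugf d (d * k + e) (d * a + f - 1) x q
      = (x * q) ^ (d * a + f - 1) * UbarGf d (d * k + e) (d * (k - a) + d) (x * q) q
        + (x * q) ^ (d * a + d + f - 1) * UbarGf d (d * k + e) (d * (k - a)) (x * q) q :=
  U_functional_equation_general d k e a f hak hed hf1 hfe x q hx hq
end
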